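/- In the group G with presentation ⟨X, Y, Z | [X,Y] = 1, Z⁻¹XZ = XY, Z⁻¹YZ = X⁻¹⟩ (the fundamental group of the hexacosm c6), the abelianization is isomorphic to Z. -/

import Mathlib

/-!
Conjugation is trivial in an abelian group, so there the relations `Z⁻¹XZ = XY` and
`Z⁻¹YZ = X⁻¹` force `Y = 1` and then `X = 1`: the abelianization is cyclic, generated by `Z`.
Sending `X, Y ↦ 0` and `Z ↦ 1` respects the relations, so `Z` has infinite order there.
-/

/-- Relators of the fundamental group of the hexacosm `c6`:
generators `X = of 0`, `Y = of 1`, `Z = of 2`, relations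
`[X,Y] = 1`, `Z⁻¹XZ = XY`, `Z⁻¹YZ = X⁻¹`. -/
def c6Rels : Set (FreeGroup (Fin 3)) :=
  { (FreeGroup.of 0)⁻¹ * (FreeGroup.of 1)⁻¹ * FreeGroup.of 0 * FreeGroup.of 1,
    (FreeGroup.of 2)⁻¹ * FreeGroup.of 0 * FreeGroup.of 2 *
      (FreeGroup.of 0 * FreeGroup.of 1)⁻¹,
    (FreeGroup.of 2)⁻¹ * FreeGroup.of 1 * FreeGroup.of 2 * FreeGroup.of 0 }

open PresentedGroup

section CommGroup

variable {A : Type*} [CommGroup A] (f : PresentedGroup c6Rels →* A)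

theorem c6_map_of_one_eq_one : f (of 1) = 1 := by
  have h := congrArg f (one_of_mem (rels := c6Rels) (Or.inr (Or.inl rfl)))
  simp only [map_mul, map_inv, map_one, inv_mul_cancel_comm, mul_inv_rev,
    mul_inv_cancel_comm_assoc, inv_eq_one] at h
  exact h

theorem c6_map_of_zero_eq_one : f (of 0) = 1 := by
  have h := congrArg f (one_of_mem (rels := c6Rels) (Or.inr (Or.inr rfl)))
  simp only [map_mul, map_inv, map_one, inv_mul_cancel_comm] at h
  rwa [show f (mk c6Rels (FreeGroup.of 1)) = 1 from c6_map_of_one_eq_one f, one_mul] at h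

end CommGroup

def c6ToInt : PresentedGroup c6Rels →* Multiplicative ℤ :=
  toGroup (f := ![1, 1, .ofAdd 1]) <| by
    rintro r (rfl | rfl | rfl) <;> simp

theorem c6ToInt_of_two : c6ToInt (of 2) = .ofAdd 1 :=
  toGroup.of _

theorem c6_abelianization :
    Nonempty (Abelianization (PresentedGroup c6Rels) ≃* Multiplicative ℤ) := by
  let z : Abelianization (PresentedGroup c6Rels) := .of (of 2)
  refine ⟨(Abelianization.lift c6ToInt).toMulEquiv (zpowersHom _ z) ?_ ?_⟩
  · refine Abelianization.hom_ext _ _ (PresentedGroup.ext fun i => ?_)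
    fin_cases i
    · simp [c6_map_of_zero_eq_one]
    · simp [c6_map_of_one_eq_one]
    · simp [z, c6ToInt_of_two]
  · exact MonoidHom.ext_mint (by simp [z, c6ToInt_of_two])
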